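/- Heap-extension (weakening) lemma for the natural semantics of λ_letrec: for heaps Ψ, Ψ', Φ with dom(Ψ') disjoint from dom(Φ), and M such that both ⟨Ψ⟩M and ⟨Ψ ∪ Ψ'⟩M are closed configurations, ⟨Ψ⟩M ⇓ ⟨Φ⟩V holds if and only if ⟨Ψ ∪ Ψ'⟩M ⇓ ⟨Φ ∪ Ψ'⟩V holds, and the two derivations have the same depth. -/

import Mathlib

/-! # The cyclic call-by-need calculus λ_letrec (and its call-by-value variant) -/

inductive RExpr : Type
  | var : ℕ → RExpr
  | lam : ℕ → RExpr → RExpr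
  | app : RExpr → RExpr → RExpr
  | letr : List (ℕ × RExpr) → RExpr → RExpr
  | bh : RExpr        -- the black hole •

abbrev Binds := List (ℕ × RExpr)

namespace RExpr

mutual
/-- free variables -/
def FVR : RExpr → Finset ℕ
  | var x => {x}
  | lam x M => FVR M \ {x}
  | app M N => FVR M ∪ FVR N
  | bh => ∅
  | letr ds M => (FVRL ds ∪ FVR M) \ (ds.map Prod.fst).toFinset
def FVRL : Binds → Finset ℕ
  | [] => ∅
  | (_, M) :: ds => FVR M ∪ FVRL ds
end

mutual
/-- `substVar M x x'` renames free occurrences of `x` in `M` to `x'`. -/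
def substVar : RExpr → ℕ → ℕ → RExpr
  | var y, x, x' => if y = x then var x' else var y
  | lam y M, x, x' => if y = x then lam y M else lam y (substVar M x x')
  | app M N, x, x' => app (substVar M x x') (substVar N x x')
  | bh, _, _ => bh
  | letr ds M, x, x' =>
      if x ∈ ds.map Prod.fst then letr ds M
      else letr (substVarL ds x x') (substVar M x x')
def substVarL : Binds → ℕ → ℕ → Binds
  | [], _, _ => []
  | (y, M) :: ds, x, x' => (y, substVar M x x') :: substVarL ds x x'
end

/-- simultaneous renaming realized by iterated renaming to fresh names -/
def renameList (prs : List (ℕ × ℕ)) (M : RExpr) : RExpr :=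
  prs.foldl (fun M p => substVar M p.1 p.2) M

def IsValR : RExpr → Prop
  | lam _ _ => True
  | bh => True
  | _ => False

inductive AnswerR : RExpr → Prop
  | lam (x M) : AnswerR (lam x M)
  | bh : AnswerR bh
  | letr (D A) : AnswerR A → AnswerR (letr D A)

/-- good answers : answers whose value part is an abstraction -/
inductive GoodR : RExpr → Prop
  | lam (x M) : GoodR (lam x M)
  | letr (D G) : GoodR G → GoodR (letr D G)

def ClosedR (M : RExpr) : Prop := FVR M = ∅

/-- purity : no black hole occurs -/
inductive Pure : RExpr → Prop
  | var (x) : Pure (var x)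
  | lam (x M) : Pure M → Pure (lam x M)
  | app (M N) : Pure M → Pure N → Pure (app M N)
  | letr (ds M) : (∀ p ∈ ds, Pure p.2) → Pure M → Pure (letr ds M)

end RExpr

open RExpr

/-! ## Evaluation contexts (shared between by-need and by-value variants) -/

mutual
inductive RCtx : Type
  | hole : RCtx
  | appL : RCtx → RExpr → RCtx                     -- E M
  | appR : RExpr → RCtx → RCtx                     -- V E (by-value only)
  | letrIn : Binds → RCtx → RCtx                   -- let rec D in E
  | letrVar : ℕ → RCtx → Binds → RCtx → RCtx       -- let rec x=E, D in E'[x]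
  | letrDep : ℕ → RCtx → DepChain → Binds → RCtx → RCtx
      -- let rec x'=E, x↝x', D in E'[x]  (x is the start of the chain)
/-- a dependency chain x ↝ x'; the final hole is filled with the target of the chain -/
inductive DepChain : Type
  | single : ℕ → RCtx → DepChain                   -- x = E[·]
  | cons : ℕ → RCtx → DepChain → DepChain          -- x = E[y], chain from y
end

namespace RCtx

/-- the first (demanded) variable of a chain -/
def chainStart : DepChain → ℕ
  | .single x _ => x
  | .cons x _ _ => x

mutual
/-- plugging an expression into a context -/
def plugC : RCtx → RExpr → RExpr
  | hole, M => M
  | appL E N, M => .app (plugC E M) N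
  | appR V E, M => .app V (plugC E M)
  | letrIn D E, M => .letr D (plugC E M)
  | letrVar x E D E', M => .letr ((x, plugC E M) :: D) (plugC E' (.var x))
  | letrDep x' E c D E', M =>
      .letr ((x', plugC E M) :: chainBindsTo c (.var x') ++ D)
        (plugC E' (.var (chainStart c)))
/-- the bindings of a dependency chain whose final hole is filled by `L` -/
def chainBindsTo : DepChain → RExpr → Binds
  | .single x E, L => [(x, plugC E L)]
  | .cons x E c, L => (x, plugC E (.var (chainStart c))) :: chainBindsTo c L
end

-- call-by-need evaluation contexts (no `appR`)
mutual
inductive Need : RCtx → Prop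
  | hole : Need hole
  | appL {E N} : Need E → Need (appL E N)
  | letrIn {D E} : Need E → Need (letrIn D E)
  | letrVar {x E D E'} : Need E → Need E' → Need (letrVar x E D E')
  | letrDep {x' E c D E'} : Need E → NeedChain c → Need E' → Need (letrDep x' E c D E')
inductive NeedChain : DepChain → Prop
  | single {x E} : Need E → NeedChain (.single x E)
  | cons {x E c} : Need E → NeedChain c → NeedChain (.cons x E c)
end

-- call-by-value evaluation contexts (`appR` restricted to values)
mutual
inductive Val : RCtx → Prop
  | hole : Val hole
  | appL {E N} : Val E → Val (appL E N)
  | appR {V E} : IsValR V → Val E → Val (appR V E)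
  | letrIn {D E} : Val E → Val (letrIn D E)
  | letrVar {x E D E'} : Val E → Val E' → Val (letrVar x E D E')
  | letrDep {x' E c D E'} : Val E → ValChain c → Val E' → Val (letrDep x' E c D E')
inductive ValChain : DepChain → Prop
  | single {x E} : Val E → ValChain (.single x E)
  | cons {x E c} : Val E → ValChain c → ValChain (.cons x E c)
end

end RCtx

open RCtx

/-! ## Reduction semantics -/

/-- the rules shared by the by-need and by-value calculi -/
inductive CRedex : RExpr → RExpr → Prop
  | lift (D A N) : AnswerR A →
      CRedex (.app (.letr D A) N) (.letr D (.app A N))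
  | deref (D₁ D₂ x V E) : IsValR V →
      CRedex (.letr (D₁ ++ (x, V) :: D₂) (plugC E (.var x)))
             (.letr (D₁ ++ (x, V) :: D₂) (plugC E V))
  | derefEnv (c x' V D E) : IsValR V →
      CRedex (.letr (chainBindsTo c (.var x') ++ (x', V) :: D)
                (plugC E (.var (chainStart c))))
             (.letr (chainBindsTo c V ++ (x', V) :: D)
                (plugC E (.var (chainStart c))))
  | assoc (x D A D' E) : AnswerR A →
      CRedex (.letr ((x, .letr D A) :: D') (plugC E (.var x)))
             (.letr (D ++ (x, A) :: D') (plugC E (.var x)))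
  | assocEnv (x' D A c D' E) : AnswerR A →
      CRedex (.letr ((x', .letr D A) :: chainBindsTo c (.var x') ++ D')
                (plugC E (.var (chainStart c))))
             (.letr (D ++ (x', A) :: chainBindsTo c (.var x') ++ D')
                (plugC E (.var (chainStart c))))
  | error (c D E) :
      CRedex (.letr (chainBindsTo c (.var (chainStart c)) ++ D)
                (plugC E (.var (chainStart c))))
             (.letr (chainBindsTo c .bh ++ D)
                (plugC E (.var (chainStart c))))
  | errorEnv (c' x' c D E) : chainStart c' = x' →
      CRedex (.letr (chainBindsTo c' (.var x') ++ chainBindsTo c (.var x') ++ D)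
                (plugC E (.var (chainStart c))))
             (.letr (chainBindsTo c' .bh ++ chainBindsTo c (.var x') ++ D)
                (plugC E (.var (chainStart c))))
  | errorBeta (M) : CRedex (.app .bh M) .bh

/-- the notion of reduction of λ_letrec -/
inductive RRedex : RExpr → RExpr → Prop
  | beta (x M N) : RRedex (.app (.lam x M) N) (.letr [(x, N)] M)
  | common {M N} : CRedex M N → RRedex M N

/-- the notion of reduction of the call-by-value variant λ_letrec^val -/
inductive VRedex : RExpr → RExpr → Prop
  | betaV (x M x' M') :
      VRedex (.app (.lam x M) (.lam x' M')) (.letr [(x, .lam x' M')] M)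
  | liftArg (V D A) : IsValR V → AnswerR A →
      VRedex (.app V (.letr D A)) (.letr D (.app V A))
  | errorArg (x M) : VRedex (.app (.lam x M) .bh) .bh
  | common {M N} : CRedex M N → VRedex M N

/-- standard (call-by-need) reduction of λ_letrec -/
def RStep (M N : RExpr) : Prop :=
  ∃ E M' N', RCtx.Need E ∧ RRedex M' N' ∧ M = plugC E M' ∧ N = plugC E N'

def RSteps : RExpr → RExpr → Prop := Relation.ReflTransGen RStep

/-- standard (call-by-value) reduction of λ_letrec^val -/
def VStep (M N : RExpr) : Prop :=
  ∃ E M' N', RCtx.Val E ∧ VRedex M' N' ∧ M = plugC E M' ∧ N = plugC E N'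

def VSteps : RExpr → RExpr → Prop := Relation.ReflTransGen VStep

/-! ## Heaps and the natural semantics -/

abbrev RHeap := Finmap (fun _ : ℕ => RExpr)

def insertList (Ψ : RHeap) (bs : Binds) : RHeap :=
  bs.foldl (fun Ψ p => Ψ.insert p.1 p.2) Ψ

def HeapClosedR (Ψ : RHeap) : Prop :=
  ∀ x M, Ψ.lookup x = some M → FVR M ⊆ Ψ.keys

def ConfigClosedR (Ψ : RHeap) (M : RExpr) : Prop :=
  HeapClosedR Ψ ∧ FVR M ⊆ Ψ.keys

/-- renaming pairs for a letrec binding group -/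
def bindRen (ds : Binds) (xs : List ℕ) : List (ℕ × ℕ) :=
  List.zip (ds.map Prod.fst) xs

/-- The depth-indexed natural semantics ⟨Ψ⟩M ⇓ ⟨Φ⟩V of λ_letrec. -/
inductive EvalR : ℕ → RHeap → RExpr → RHeap → RExpr → Prop
  | value {Ψ V} : IsValR V → EvalR 1 Ψ V Ψ V
  | app {m n Ψ M₁ M₂ Φ x N x' Ψ' V} :
      EvalR m Ψ M₁ Φ (.lam x N) →
      x' ∉ Φ.keys → x' ∉ FVR M₂ → x' ∉ FVR N →
      EvalR n (Φ.insert x' M₂) (substVar N x x') Ψ' V →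
      EvalR (max m n + 1) Ψ (.app M₁ M₂) Ψ' V
  | varr {n Ψ x M Φ V} :
      Ψ.lookup x = some M →
      EvalR n (Ψ.insert x .bh) M Φ V →
      EvalR (n + 1) Ψ (.var x) (Φ.insert x V) V
  | letr {n Ψ ds N xs Φ V} :
      xs.length = ds.length → xs.Nodup →
      (∀ x' ∈ xs, x' ∉ Ψ.keys ∧ x' ∉ FVRL ds ∧ x' ∉ FVR N ∧
        x' ∉ (ds.map Prod.fst).toFinset) →
      EvalR n
        (insertList Ψ
          (List.zip xs (ds.map fun p => renameList (bindRen ds xs) p.2)))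
        (renameList (bindRen ds xs) N) Φ V →
      EvalR (n + 1) Ψ (.letr ds N) Φ V
  | errBeta {n Ψ M₁ M₂ Φ} :
      EvalR n Ψ M₁ Φ .bh →
      EvalR (n + 1) Ψ (.app M₁ M₂) Φ .bh

/-- the natural semantics, with the derivation depth hidden -/
def EvalAny (Ψ : RHeap) (M : RExpr) (Φ : RHeap) (V : RExpr) : Prop :=
  ∃ n, EvalR n Ψ M Φ V

/-! ## Nestings of letrec's Θ ::= [] | Θ[let rec D in []] -/

/-- a nesting of letrec's; the head is the innermost group -/
abbrev LetrNest := List Binds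

def rtplug : LetrNest → RExpr → RExpr
  | [], M => M
  | D :: Θ, M => rtplug Θ (.letr D M)

/-- ⌊Θ⌋ : the heap collecting all bindings of Θ -/
def rtheap (Θ : LetrNest) : RHeap := insertList ∅ Θ.flatten

/-! ## α-equivalence for λ_letrec -/

inductive AlphaEqR : RExpr → RExpr → Prop
  | var (x) : AlphaEqR (.var x) (.var x)
  | bh : AlphaEqR .bh .bh
  | app {M M' N N'} : AlphaEqR M M' → AlphaEqR N N' → AlphaEqR (.app M N) (.app M' N')
  | lam {x y M N} :
      (∀ z, z ∉ FVR M ∪ FVR N ∪ {x, y} → AlphaEqR (substVar M x z) (substVar N y z)) →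
      AlphaEqR (.lam x M) (.lam y N)
  | letr {ds ds' M M'} :
      ds.length = ds'.length →
      (∀ zs : List ℕ, zs.length = ds.length → zs.Nodup →
        (∀ z ∈ zs, z ∉ FVR (.letr ds M) ∪ FVR (.letr ds' M') ∪
          (ds.map Prod.fst).toFinset ∪ (ds'.map Prod.fst).toFinset) →
        AlphaEqR (renameList (bindRen ds zs) M) (renameList (bindRen ds' zs) M')) →
      (∀ zs : List ℕ, zs.length = ds.length → zs.Nodup →
        (∀ z ∈ zs, z ∉ FVR (.letr ds M) ∪ FVR (.letr ds' M') ∪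
          (ds.map Prod.fst).toFinset ∪ (ds'.map Prod.fst).toFinset) →
        ∀ (i : ℕ) (h : i < ds.length) (h' : i < ds'.length),
          AlphaEqR (renameList (bindRen ds zs) (ds.get ⟨i, h⟩).2)
                   (renameList (bindRen ds' zs) (ds'.get ⟨i, h'⟩).2)) →
      AlphaEqR (.letr ds M) (.letr ds' M')

/-!
Both directions are inductions on the derivation, which keep its shape and hence its depth.
Evaluation only adds keys to the heap, so a heap `Ψ'` disjoint from the final heap is disjoint
from every intermediate one: its bindings are never looked up or overwritten, and names chosen
fresh for the small heaps stay fresh in the large ones. Conversely, evaluation preserves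
closedness of configurations, so every variable looked up while evaluating the closed `⟨Ψ⟩M`
lies in the `Ψ`-part of the heap, and the `Ψ'`-part splits off every intermediate heap of a
derivation from `Ψ ∪ Ψ'`; disjointness then lets `Φ ∪ Ψ'` determine `Φ`.
-/

namespace Finmap

variable {α : Type*} {β : α → Type*}

theorem keys_subset_keys_insert [DecidableEq α] (s : Finmap β) (a : α) (b : β a) :
    s.keys ⊆ (s.insert a b).keys := fun x hx => by
  simp only [mem_keys, mem_insert] at hx ⊢
  exact Or.inr hx

theorem Disjoint.mono_right {s t t' : Finmap β} (h : t.keys ⊆ t'.keys) (hd : s.Disjoint t') :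
    s.Disjoint t := fun x hx ht => hd x hx (mem_keys.mp (h (mem_keys.mpr ht)))

theorem disjoint_insert_right [DecidableEq α] {s t : Finmap β} {a : α} {b : β a} :
    s.Disjoint (t.insert a b) ↔ a ∉ s ∧ s.Disjoint t := by
  simp only [Disjoint, mem_insert, not_or]
  exact ⟨fun h => ⟨fun ha => (h a ha).1 rfl, fun x hx => (h x hx).2⟩,
    fun h x hx => ⟨by rintro rfl; exact h.1 hx, h.2 x hx⟩⟩

end Finmap

namespace RExpr

theorem map_fst_substVarL (ds : Binds) (x x' : ℕ) :
    (substVarL ds x x').map Prod.fst = ds.map Prod.fst := by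
  induction ds with
  | nil => rfl
  | cons p ds ih => simp [substVarL, ih]

mutual
theorem FVR_substVar_subset : ∀ (M : RExpr) (x x' : ℕ),
    FVR (substVar M x x') ⊆ FVR M \ {x} ∪ {x'}
  | .var y, x, x' => by
      by_cases h : y = x <;> simp [substVar, FVR, h]
  | .lam y M, x, x' => by
      have := FVR_substVar_subset M x x'
      by_cases h : y = x
      · subst h; intro a; simp +contextual [substVar, FVR]
      · intro a ha
        simp only [substVar, h, FVR, if_false] at ha ⊢
        grind
  | .app M N, x, x' => by
      have := FVR_substVar_subset M x x'
      have := FVR_substVar_subset N x x'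
      simp only [substVar, FVR]
      grind
  | .bh, x, x' => by simp [substVar, FVR]
  | .letr ds M, x, x' => by
      have := FVRL_substVarL_subset ds x x'
      have := FVR_substVar_subset M x x'
      by_cases h : x ∈ ds.map Prod.fst
      · have hx : x ∉ FVR (.letr ds M) := by simp [FVR, h]
        simp only [substVar, h, if_true, Finset.sdiff_singleton_eq_erase,
          Finset.erase_eq_of_notMem hx]
        exact Finset.subset_union_left
      · simp only [substVar, h, if_false, FVR, map_fst_substVarL]
        grind
theorem FVRL_substVarL_subset : ∀ (ds : Binds) (x x' : ℕ),
    FVRL (substVarL ds x x') ⊆ FVRL ds \ {x} ∪ {x'}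
  | [], x, x' => by simp [substVarL, FVRL]
  | (y, M) :: ds, x, x' => by
      have := FVR_substVar_subset M x x'
      have := FVRL_substVarL_subset ds x x'
      simp only [substVarL, FVRL]
      grind
end

theorem FVR_renameList_subset (prs : List (ℕ × ℕ))
    (hprs : ∀ p ∈ prs, ∀ q ∈ prs, p.2 ≠ q.1) (M : RExpr) :
    FVR (renameList prs M) ⊆
      FVR M \ (prs.map Prod.fst).toFinset ∪ (prs.map Prod.snd).toFinset := by
  induction prs generalizing M with
  | nil => simp [renameList]
  | cons p prs ih =>
      -- the new name `p.2` is not renamed again, since it is none of the later `q.1`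
      have hp : p.2 ∉ prs.map Prod.fst := by
        simp only [List.mem_map, not_exists, not_and]
        exact fun q hq hq1 => hprs p List.mem_cons_self q (List.mem_cons_of_mem _ hq) hq1.symm
      have ih := ih (fun q hq r hr => hprs q (List.mem_cons_of_mem _ hq) r
        (List.mem_cons_of_mem _ hr)) (substVar M p.1 p.2)
      have hsubst := FVR_substVar_subset M p.1 p.2
      intro a ha
      have ha := ih ha
      simp only [List.map_cons, List.toFinset_cons, Finset.mem_union, Finset.mem_sdiff,
        Finset.mem_insert, List.mem_toFinset] at ha hsubst ⊢
      grind

theorem FVR_renameList_bindRen_subset {ds : Binds} {xs : List ℕ} (hlen : xs.length = ds.length)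
    (hfresh : ∀ x ∈ xs, x ∉ (ds.map Prod.fst).toFinset) (M : RExpr) :
    FVR (renameList (bindRen ds xs) M) ⊆
      FVR M \ (ds.map Prod.fst).toFinset ∪ xs.toFinset := by
  have hlen' : (ds.map Prod.fst).length = xs.length := by simp [hlen]
  have h := FVR_renameList_subset (bindRen ds xs) ?_ M
  · rwa [bindRen, List.map_fst_zip hlen'.le, List.map_snd_zip hlen'.ge] at h
  · intro p hp q hq hpq
    exact hfresh p.2 (List.of_mem_zip hp).2
      (hpq ▸ List.mem_toFinset.mpr (List.of_mem_zip hq).1)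

theorem FVR_subset_FVRL_of_mem {ds : Binds} {p : ℕ × RExpr} (hp : p ∈ ds) :
    FVR p.2 ⊆ FVRL ds := by
  induction ds with
  | nil => simp at hp
  | cons q ds ih =>
      obtain ⟨y, N⟩ := q
      rcases List.mem_cons.mp hp with rfl | hp
      · exact Finset.subset_union_left
      · exact (ih hp).trans Finset.subset_union_right

end RExpr

theorem insertList_cons (Ψ : RHeap) (p : ℕ × RExpr) (bs : Binds) :
    insertList Ψ (p :: bs) = insertList (Ψ.insert p.1 p.2) bs := rfl

theorem mem_insertList {Ψ : RHeap} {bs : Binds} {x : ℕ} :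
    x ∈ insertList Ψ bs ↔ x ∈ Ψ ∨ x ∈ bs.map Prod.fst := by
  induction bs generalizing Ψ with
  | nil => simp [insertList]
  | cons p bs ih =>
      simp only [insertList_cons, ih, Finmap.mem_insert, List.map_cons, List.mem_cons]
      tauto

theorem mem_insertList_zip {Ψ : RHeap} {xs : List ℕ} {Ms : List RExpr}
    (h : xs.length ≤ Ms.length) {x : ℕ} : x ∈ insertList Ψ (xs.zip Ms) ↔ x ∈ Ψ ∨ x ∈ xs := by
  rw [mem_insertList, List.map_fst_zip h]

theorem keys_subset_keys_insertList (Ψ : RHeap) (bs : Binds) :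
    Ψ.keys ⊆ (insertList Ψ bs).keys := fun x hx => by
  simp only [Finmap.mem_keys, mem_insertList] at hx ⊢
  exact Or.inl hx

theorem lookup_insertList_eq_some {Ψ : RHeap} {bs : Binds} {x : ℕ} {M : RExpr}
    (h : (insertList Ψ bs).lookup x = some M) : Ψ.lookup x = some M ∨ (x, M) ∈ bs := by
  induction bs generalizing Ψ with
  | nil => exact Or.inl h
  | cons p bs ih =>
      obtain ⟨y, N⟩ := p
      rcases ih h with h | h
      · by_cases hx : x = y
        · subst hx
          rw [Finmap.lookup_insert, Option.some_inj] at h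
          exact Or.inr (h ▸ List.mem_cons_self)
        · rw [Finmap.lookup_insert_of_ne _ hx] at h
          exact Or.inl h
      · exact Or.inr (List.mem_cons_of_mem _ h)

theorem insertList_union (bs : Binds) (Ψ Ψ' : RHeap) :
    insertList (Ψ ∪ Ψ') bs = insertList Ψ bs ∪ Ψ' := by
  induction bs generalizing Ψ with
  | nil => rfl
  | cons p bs ih => rw [insertList_cons, insertList_cons, Finmap.insert_union, ih]

theorem HeapClosedR.insert {Ψ : RHeap} (hΨ : HeapClosedR Ψ) {x : ℕ} {M : RExpr}
    (hM : FVR M ⊆ Ψ.keys) : HeapClosedR (Ψ.insert x M) := by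
  intro y N hy
  by_cases hyx : y = x
  · subst hyx
    rw [Finmap.lookup_insert, Option.some_inj] at hy
    exact hy ▸ hM.trans (Finmap.keys_subset_keys_insert _ _ _)
  · rw [Finmap.lookup_insert_of_ne _ hyx] at hy
    exact (hΨ y N hy).trans (Finmap.keys_subset_keys_insert _ _ _)

theorem HeapClosedR.insertList {Ψ : RHeap} (hΨ : HeapClosedR Ψ) {bs : Binds}
    (hbs : ∀ p ∈ bs, FVR p.2 ⊆ (insertList Ψ bs).keys) : HeapClosedR (insertList Ψ bs) := by
  intro y N hy
  rcases lookup_insertList_eq_some hy with hy | hy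
  · exact (hΨ y N hy).trans (keys_subset_keys_insertList Ψ bs)
  · exact hbs _ hy

namespace ConfigClosedR

variable {Ψ : RHeap}

theorem app_left {M₁ M₂ : RExpr} (h : ConfigClosedR Ψ (.app M₁ M₂)) : ConfigClosedR Ψ M₁ :=
  ⟨h.1, Finset.subset_union_left.trans h.2⟩

theorem FVR_app_right_subset {M₁ M₂ : RExpr} (h : ConfigClosedR Ψ (.app M₁ M₂)) :
    FVR M₂ ⊆ Ψ.keys :=
  Finset.subset_union_right.trans h.2

theorem beta {x x' : ℕ} {N M : RExpr} (h : ConfigClosedR Ψ (.lam x N)) (hM : FVR M ⊆ Ψ.keys) :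
    ConfigClosedR (Ψ.insert x' M) (substVar N x x') := by
  refine ⟨h.1.insert hM, (FVR_substVar_subset N x x').trans (Finset.union_subset ?_ ?_)⟩
  · exact h.2.trans (Finmap.keys_subset_keys_insert _ _ _)
  · simp [Finmap.mem_keys, Finmap.mem_insert]

theorem deref {x : ℕ} {M : RExpr} (hΨ : HeapClosedR Ψ) (hx : Ψ.lookup x = some M) :
    ConfigClosedR (Ψ.insert x .bh) M :=
  ⟨hΨ.insert (by simp [FVR]), (hΨ x M hx).trans (Finmap.keys_subset_keys_insert _ _ _)⟩

theorem update {x : ℕ} {V : RExpr} (h : ConfigClosedR Ψ V) : ConfigClosedR (Ψ.insert x V) V :=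
  ⟨h.1.insert h.2, h.2.trans (Finmap.keys_subset_keys_insert _ _ _)⟩

theorem letr_unfold {ds : Binds} {N : RExpr} {xs : List ℕ} (h : ConfigClosedR Ψ (.letr ds N))
    (hlen : xs.length = ds.length) (hfresh : ∀ x ∈ xs, x ∉ (ds.map Prod.fst).toFinset) :
    ConfigClosedR
      (insertList Ψ (List.zip xs (ds.map fun p => renameList (bindRen ds xs) p.2)))
      (renameList (bindRen ds xs) N) := by
  set Ψ₁ := insertList Ψ (List.zip xs (ds.map fun p => renameList (bindRen ds xs) p.2))
  have hxs : xs.toFinset ⊆ Ψ₁.keys := fun a ha => by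
    rw [Finmap.mem_keys, mem_insertList_zip (by simp [hlen])]
    exact Or.inr (List.mem_toFinset.mp ha)
  have hrename (P : RExpr) (hP : FVR P ⊆ FVRL ds ∪ FVR N) :
      FVR (renameList (bindRen ds xs) P) ⊆ Ψ₁.keys :=
    (FVR_renameList_bindRen_subset hlen hfresh P).trans <| Finset.union_subset
      ((Finset.sdiff_subset_sdiff hP le_rfl).trans
        (h.2.trans (keys_subset_keys_insertList _ _))) hxs
  refine ⟨h.1.insertList fun p hp => ?_, hrename N Finset.subset_union_right⟩
  obtain ⟨q, hq, hqp⟩ := List.mem_map.mp (List.of_mem_zip hp).2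
  exact hqp ▸ hrename q.2 ((FVR_subset_FVRL_of_mem hq).trans Finset.subset_union_left)

end ConfigClosedR

namespace EvalR

variable {n : ℕ} {Ψ Φ : RHeap} {M V : RExpr}

theorem keys_subset (h : EvalR n Ψ M Φ V) : Ψ.keys ⊆ Φ.keys := by
  induction h with
  | value _ => exact subset_rfl
  | app _ _ _ _ _ ih₁ ih₂ => exact ih₁.trans ((Finmap.keys_subset_keys_insert _ _ _).trans ih₂)
  | varr _ _ ih =>
      exact ((Finmap.keys_subset_keys_insert _ _ _).trans ih).trans
        (Finmap.keys_subset_keys_insert _ _ _)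
  | letr _ _ _ _ ih => exact (keys_subset_keys_insertList _ _).trans ih
  | errBeta _ ih => exact ih

theorem configClosedR (h : EvalR n Ψ M Φ V) (hc : ConfigClosedR Ψ M) : ConfigClosedR Φ V := by
  induction h with
  | value _ => exact hc
  | app h₁ _ _ _ _ ih₁ ih₂ =>
      exact ih₂ ((ih₁ hc.app_left).beta (hc.FVR_app_right_subset.trans h₁.keys_subset))
  | varr hx _ ih => exact (ih (ConfigClosedR.deref hc.1 hx)).update
  | letr hlen _ hfresh _ ih => exact ih (hc.letr_unfold hlen fun x hx => (hfresh x hx).2.2.2)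
  | errBeta _ ih => exact ⟨(ih hc.app_left).1, by simp [FVR]⟩

theorem union_right (h : EvalR n Ψ M Φ V) {Ψ' : RHeap} (hd : Ψ'.Disjoint Φ) :
    EvalR n (Ψ ∪ Ψ') M (Φ ∪ Ψ') V := by
  induction h with
  | value hV => exact value hV
  | @app _ _ _ _ M₂ Φ₀ _ _ x' _ _ _ hx' hx'M₂ hx'N h₂ ih₁ ih₂ =>
      have hd₀ : Ψ'.Disjoint (Φ₀.insert x' M₂) := hd.mono_right h₂.keys_subset
      have e₂ := ih₂ hd
      rw [← Finmap.insert_union] at e₂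
      refine app (ih₁ (hd₀.mono_right (Finmap.keys_subset_keys_insert _ _ _))) ?_ hx'M₂ hx'N e₂
      simp only [Finmap.keys_union, Finset.mem_union, not_or]
      exact ⟨hx', mt Finmap.mem_keys.mp (Finmap.disjoint_insert_right.mp hd₀).1⟩
  | @varr _ Ψ x _ _ V hx _ ih =>
      have hxΨ : x ∈ Ψ := Finmap.mem_of_lookup_eq_some hx
      have e := ih (hd.mono_right (Finmap.keys_subset_keys_insert _ _ _))
      rw [← Finmap.insert_union] at e
      rw [← Finmap.insert_union]
      exact varr (by rwa [Finmap.lookup_union_left hxΨ]) e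
  | @letr _ Ψ _ _ _ _ _ hlen hnd hfresh h ih =>
      have e := ih hd
      rw [← insertList_union] at e
      refine letr hlen hnd (fun x' hx' => ?_) e
      obtain ⟨hx'Ψ, hx'ds, hx'N, hx'names⟩ := hfresh x' hx'
      have hx'Φ := Finmap.mem_keys.mp (h.keys_subset (Finmap.mem_keys.mpr
        ((mem_insertList_zip (by simp [hlen]) (Ψ := Ψ)).mpr (Or.inr hx'))))
      refine ⟨?_, hx'ds, hx'N, hx'names⟩
      simp only [Finmap.keys_union, Finset.mem_union, not_or]
      exact ⟨hx'Ψ, fun hm => hd x' (Finmap.mem_keys.mp hm) hx'Φ⟩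
  | errBeta _ ih => exact errBeta (ih hd)

theorem of_union_right {Θ Θ' : RHeap} (h : EvalR n Θ M Θ' V) {Ψ Ψ' : RHeap}
    (hΘ : Θ = Ψ ∪ Ψ') (hd : Ψ'.Disjoint Ψ) (hc : ConfigClosedR Ψ M) :
    ∃ Φ, Θ' = Φ ∪ Ψ' ∧ Ψ'.Disjoint Φ ∧ EvalR n Ψ M Φ V := by
  induction h generalizing Ψ with
  | value hV => exact ⟨Ψ, hΘ, hd, value hV⟩
  | app _ hx' hx'M₂ hx'N _ ih₁ ih₂ =>
      obtain ⟨Φ₀, rfl, hd₀, e₁⟩ := ih₁ hΘ hd hc.app_left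
      simp only [Finmap.keys_union, Finset.mem_union, not_or, Finmap.mem_keys] at hx'
      obtain ⟨Φ₁, rfl, hd₁, e₂⟩ := ih₂ Finmap.insert_union
        (Finmap.disjoint_insert_right.mpr ⟨hx'.2, hd₀⟩)
        ((e₁.configClosedR hc.app_left).beta (hc.FVR_app_right_subset.trans e₁.keys_subset))
      exact ⟨Φ₁, rfl, hd₁, app e₁ (mt Finmap.mem_keys.mp hx'.1) hx'M₂ hx'N e₂⟩
  | @varr _ _ x _ _ V hx _ ih =>
      subst hΘ
      -- closedness puts `x` in `Ψ`, so the lookup does not reach `Ψ'`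
      have hxΨ : x ∈ Ψ := Finmap.mem_keys.mp (hc.2 (by simp [FVR]))
      have hxΨ' : x ∉ Ψ' := fun hm => hd x hm hxΨ
      rw [Finmap.lookup_union_left hxΨ] at hx
      obtain ⟨Φ₀, rfl, hd₀, e⟩ := ih Finmap.insert_union
        (Finmap.disjoint_insert_right.mpr ⟨hxΨ', hd⟩) (ConfigClosedR.deref hc.1 hx)
      exact ⟨Φ₀.insert x V, Finmap.insert_union,
        Finmap.disjoint_insert_right.mpr ⟨hxΨ', hd₀⟩, varr hx e⟩
  | @letr _ _ ds _ xs _ _ hlen hnd hfresh _ ih =>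
      subst hΘ
      simp only [Finmap.keys_union, Finset.mem_union, not_or, Finmap.mem_keys] at hfresh
      have hd₁ : Ψ'.Disjoint
          (insertList Ψ (xs.zip (ds.map fun p => renameList (bindRen ds xs) p.2))) := by
        intro a ha hmem
        rw [mem_insertList_zip (by simp [hlen])] at hmem
        exact hmem.elim (hd a ha) fun hmem => (hfresh a hmem).1.2 ha
      obtain ⟨Φ, rfl, hd', e⟩ := ih (insertList_union _ _ _) hd₁
        (hc.letr_unfold hlen fun x hx => (hfresh x hx).2.2.2)
      refine ⟨Φ, rfl, hd', letr hlen hnd (fun x hx => ?_) e⟩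
      obtain ⟨⟨hxΨ, -⟩, hrest⟩ := hfresh x hx
      exact ⟨mt Finmap.mem_keys.mp hxΨ, hrest⟩
  | errBeta _ ih =>
      obtain ⟨Φ, rfl, hd', e⟩ := ih hΘ hd hc.app_left
      exact ⟨Φ, rfl, hd', errBeta e⟩

end EvalR

/-- Heap-extension (weakening) lemma for the natural semantics of λ_letrec:
extending the heap with irrelevant bindings does not affect derivations, and
the derivations have the same depth. -/
theorem eval_heap_weakening
    (Ψ Ψ' Φ : RHeap) (M V : RExpr)
    (hΨ : Ψ.Disjoint Ψ') (hΦ : Ψ'.Disjoint Φ)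
    (hc : ConfigClosedR Ψ M) (hc' : ConfigClosedR (Ψ ∪ Ψ') M) :
    ∀ n : ℕ, EvalR n Ψ M Φ V ↔ EvalR n (Ψ ∪ Ψ') M (Φ ∪ Ψ') V := by
  intro n
  refine ⟨fun h => h.union_right hΦ, fun h => ?_⟩
  obtain ⟨Φ₀, hΦ₀, hd₀, e⟩ := h.of_union_right rfl (hΨ.symm _ _) hc
  rwa [Finmap.union_cancel (hΦ.symm _ _) (hd₀.symm _ _) |>.mp hΦ₀]
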